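/- arXiv:2409.00208 — 2 statements merged into one kernel-verified Lean document; each statement's English description precedes it below -/
import Mathlib

section
/- For an explicit Runge-Kutta method with stages u^{(i)} = u^n + Δt Σ_j a_{ij} f(u^{(j)}) and update u^{n+1}_γ = u^n + γΔt Σ_i b_i f(u^{(i)}), if the inner product norm satisfies ||u^{n+1}_γ||² - ||u^n||² = 2γΔt Σ_i b_i ⟨u^{(i)}, f(u^{(i)})⟩ - 2γΔt² Σ_{i,j} b_i a_{ij} ⟨f(u^{(j)}), f(u^{(i)})⟩ + γ²Δt² Σ_{i,j} b_i b_j ⟨f(u^{(j)}), f(u^{(i)})⟩, then choosing γ = 2Σ_{i,j} b_i a_{ij} ⟨f(u^{(j)}), f(u^{(i)})⟩ / Σ_{i,j} b_i b_j ⟨f(u^{(i)}), f(u^{(j)})⟩ (when the denominator is nonzero) makes the energy change exactly equal to 2γΔt Σ_i b_i ⟨u^{(i)}, f(u^{(i)})⟩. -/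
open scoped RealInnerProductSpace

/-- choosing the relaxation parameter γ as stated makes the energy
change exactly equal to `2γΔt Σ_i b_i ⟨u^{(i)}, f(u^{(i)})⟩`. -/
theorem rrk_energy_change
    {H : Type*} [NormedAddCommGroup H] [InnerProductSpace ℝ H]
    (s : ℕ) (a : Fin s → Fin s → ℝ) (b : Fin s → ℝ)
    (u : Fin s → H) (fU : Fin s → H) (un un1 : H) (Δt γ : ℝ)
    (hB : (∑ i, ∑ j, b i * b j * ⟪fU j, fU i⟫) ≠ 0)
    (hγ : γ = 2 * (∑ i, ∑ j, b i * a i j * ⟪fU j, fU i⟫) /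
        (∑ i, ∑ j, b i * b j * ⟪fU i, fU j⟫))
    (hid : ‖un1‖ ^ 2 - ‖un‖ ^ 2 =
        2 * γ * Δt * (∑ i, b i * ⟪u i, fU i⟫)
        - 2 * γ * Δt ^ 2 * (∑ i, ∑ j, b i * a i j * ⟪fU j, fU i⟫)
        + γ ^ 2 * Δt ^ 2 * (∑ i, ∑ j, b i * b j * ⟪fU j, fU i⟫)) :
    ‖un1‖ ^ 2 - ‖un‖ ^ 2 = 2 * γ * Δt * (∑ i, b i * ⟪u i, fU i⟫) := by
  have hsym : (∑ i, ∑ j, b i * b j * ⟪fU i, fU j⟫)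
      = (∑ i, ∑ j, b i * b j * ⟪fU j, fU i⟫) := by
    rw [Finset.sum_comm]
    simp_rw [real_inner_comm]
    congr 1; ext i; congr 1; ext j; ring
  rw [hsym] at hγ
  have key : γ * (∑ i, ∑ j, b i * b j * ⟪fU j, fU i⟫)
      = 2 * (∑ i, ∑ j, b i * a i j * ⟪fU j, fU i⟫) := by
    rw [hγ]; field_simp
  rw [hid]
  linear_combination γ * Δt ^ 2 * key
end

section
/- The function (ρ, m, E) ↦ −ρ log((γ−1)(E − m²/(2ρ)) ρ^{−γ}) is convex on the domain {ρ > 0, E − m²/(2ρ) > 0}, for γ > 1 (one-dimensional Euler entropy convexity). -/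
open Real

/-- Log-sum inequality for two terms (perspective convexity of `x log x`). -/
lemma log_sum_two (a b r1 r2 e1 e2 : ℝ) (ha : 0 ≤ a) (hb : 0 ≤ b) (hab : a + b = 1)
    (hr1 : 0 < r1) (hr2 : 0 < r2) (he1 : 0 < e1) (he2 : 0 < e2) :
    (a * r1 + b * r2) * Real.log ((a * r1 + b * r2) / (a * e1 + b * e2)) ≤
      a * (r1 * Real.log (r1 / e1)) + b * (r2 * Real.log (r2 / e2)) := by
  have hs : 0 < a * e1 + b * e2 := by
    rcases ha.lt_or_eq with h | h
    · have h1 : 0 < a * e1 := mul_pos h he1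
      have h2 : 0 ≤ b * e2 := mul_nonneg hb he2.le
      linarith
    · have hb1 : b = 1 := by linarith
      simp [← h, hb1, he2]
  have hconv := Real.convexOn_mul_log.2 (Set.mem_Ici.2 (le_of_lt (div_pos hr1 he1)))
    (Set.mem_Ici.2 (le_of_lt (div_pos hr2 he2)))
    (show (0:ℝ) ≤ a * e1 / (a * e1 + b * e2) by positivity)
    (show (0:ℝ) ≤ b * e2 / (a * e1 + b * e2) by positivity)
    (by field_simp)
  simp only [smul_eq_mul] at hconv
  have key : a * e1 / (a * e1 + b * e2) * (r1 / e1) + b * e2 / (a * e1 + b * e2) * (r2 / e2)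
      = (a * r1 + b * r2) / (a * e1 + b * e2) := by
    field_simp
  rw [key] at hconv
  have := mul_le_mul_of_nonneg_left hconv hs.le
  calc (a * r1 + b * r2) * Real.log ((a * r1 + b * r2) / (a * e1 + b * e2))
      = (a * e1 + b * e2) * ((a * r1 + b * r2) / (a * e1 + b * e2) *
        Real.log ((a * r1 + b * r2) / (a * e1 + b * e2))) := by
        field_simp
    _ ≤ (a * e1 + b * e2) * (a * e1 / (a * e1 + b * e2) * (r1 / e1 * Real.log (r1 / e1)) +
        b * e2 / (a * e1 + b * e2) * (r2 / e2 * Real.log (r2 / e2))) := this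
    _ = a * (r1 * Real.log (r1 / e1)) + b * (r2 * Real.log (r2 / e2)) := by
        field_simp

lemma convpos (a b x y : ℝ) (ha : 0 ≤ a) (hb : 0 ≤ b) (hab : a + b = 1)
    (hx : 0 < x) (hy : 0 < y) : 0 < a * x + b * y := by
  rcases ha.lt_or_eq with h | h
  · have h1 := mul_pos h hx
    have h2 := mul_nonneg hb hy.le
    linarith
  · have hb1 : b = 1 := by linarith
    simp [← h, hb1, hy]

lemma entropy_split (γ ρ e : ℝ) (hγ : 1 < γ) (hρ : 0 < ρ) (he : 0 < e) :
    -ρ * Real.log ((γ - 1) * e * ρ ^ (-γ)) =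
      -(ρ * Real.log (γ - 1)) - ρ * Real.log e + (γ - 1) * (ρ * Real.log ρ)
        + ρ * Real.log ρ := by
  have hc : 0 < γ - 1 := by linarith
  rw [Real.log_mul (mul_ne_zero hc.ne' he.ne') (Real.rpow_pos_of_pos hρ _).ne',
    Real.log_mul hc.ne' he.ne', Real.log_rpow hρ]
  ring

/-- convexity of the 1D Euler mathematical entropy
`S(ρ,m,E) = -ρ log((γ-1)(E - m²/(2ρ)) ρ^{-γ})` on the admissible set. -/
theorem euler_entropy_convex (γ : ℝ) (hγ : 1 < γ) :
    ConvexOn ℝ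
      {u : ℝ × ℝ × ℝ | 0 < u.1 ∧ 0 < u.2.2 - u.2.1 ^ 2 / (2 * u.1)}
      (fun u : ℝ × ℝ × ℝ =>
        -u.1 * Real.log ((γ - 1) * (u.2.2 - u.2.1 ^ 2 / (2 * u.1)) * u.1 ^ (-γ))) := by
  have hc : 0 < γ - 1 := by linarith
  -- key concavity estimate for the internal energy
  have hmix : ∀ (a b ρ1 m1 E1 ρ2 m2 E2 : ℝ), 0 ≤ a → 0 ≤ b → a + b = 1 →
      0 < ρ1 → 0 < ρ2 →
      a * (E1 - m1 ^ 2 / (2 * ρ1)) + b * (E2 - m2 ^ 2 / (2 * ρ2)) ≤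
        (a * E1 + b * E2) - (a * m1 + b * m2) ^ 2 / (2 * (a * ρ1 + b * ρ2)) := by
    intro a b ρ1 m1 E1 ρ2 m2 E2 ha hb hab hρ1 hρ2
    have hρ : 0 < a * ρ1 + b * ρ2 := convpos a b ρ1 ρ2 ha hb hab hρ1 hρ2
    have hid : ((a * E1 + b * E2) - (a * m1 + b * m2) ^ 2 / (2 * (a * ρ1 + b * ρ2)))
        - (a * (E1 - m1 ^ 2 / (2 * ρ1)) + b * (E2 - m2 ^ 2 / (2 * ρ2)))
        = (a * b * (m1 * ρ2 - m2 * ρ1) ^ 2) / (2 * ρ1 * ρ2 * (a * ρ1 + b * ρ2)) := by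
      field_simp
      ring
    have hnn : 0 ≤ (a * b * (m1 * ρ2 - m2 * ρ1) ^ 2) / (2 * ρ1 * ρ2 * (a * ρ1 + b * ρ2)) := by
      apply div_nonneg
      · exact mul_nonneg (mul_nonneg ha hb) (sq_nonneg _)
      · positivity
    linarith [hid ▸ hnn]
  constructor
  · -- convexity of the admissible set
    intro x hx y hy a b ha hb hab
    obtain ⟨ρ1, m1, E1⟩ := x
    obtain ⟨ρ2, m2, E2⟩ := y
    obtain ⟨hρ1, he1⟩ := hx
    obtain ⟨hρ2, he2⟩ := hy
    simp only [Set.mem_setOf_eq, Prod.smul_mk, Prod.mk_add_mk, smul_eq_mul] at *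
    refine ⟨convpos a b ρ1 ρ2 ha hb hab hρ1 hρ2, ?_⟩
    have h1 := hmix a b ρ1 m1 E1 ρ2 m2 E2 ha hb hab hρ1 hρ2
    have h2 := convpos a b _ _ ha hb hab he1 he2
    linarith
  · intro x hx y hy a b ha hb hab
    obtain ⟨ρ1, m1, E1⟩ := x
    obtain ⟨ρ2, m2, E2⟩ := y
    obtain ⟨hρ1, he1⟩ := hx
    obtain ⟨hρ2, he2⟩ := hy
    simp only [Set.mem_setOf_eq] at hρ1 he1 hρ2 he2
    simp only [Prod.smul_mk, Prod.mk_add_mk, smul_eq_mul]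
    set e1 : ℝ := E1 - m1 ^ 2 / (2 * ρ1) with he1def
    set e2 : ℝ := E2 - m2 ^ 2 / (2 * ρ2) with he2def
    set ρ : ℝ := a * ρ1 + b * ρ2 with hρdef
    set ew : ℝ := (a * E1 + b * E2) - (a * m1 + b * m2) ^ 2 / (2 * ρ) with hewdef
    have hρ : 0 < ρ := convpos a b ρ1 ρ2 ha hb hab hρ1 hρ2
    have hkey : a * e1 + b * e2 ≤ ew := hmix a b ρ1 m1 E1 ρ2 m2 E2 ha hb hab hρ1 hρ2
    have hs : 0 < a * e1 + b * e2 := convpos a b e1 e2 ha hb hab he1 he2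
    have hew : 0 < ew := lt_of_lt_of_le hs hkey
    -- rewrite both sides
    rw [entropy_split γ ρ ew hγ hρ hew, entropy_split γ ρ1 e1 hγ hρ1 he1,
      entropy_split γ ρ2 e2 hγ hρ2 he2]
    -- step 1: monotonicity of log
    have h1 : -(ρ * Real.log ew) ≤ -(ρ * Real.log (a * e1 + b * e2)) := by
      have := Real.log_le_log hs hkey
      nlinarith
    -- step 2: log-sum inequality
    have h2 := log_sum_two a b ρ1 ρ2 e1 e2 ha hb hab hρ1 hρ2 he1 he2
    rw [Real.log_div hρ.ne' hs.ne', Real.log_div hρ1.ne' he1.ne',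
      Real.log_div hρ2.ne' he2.ne'] at h2
    -- step 3: convexity of x log x
    have h3 : ρ * Real.log ρ ≤ a * (ρ1 * Real.log ρ1) + b * (ρ2 * Real.log ρ2) := by
      have := Real.convexOn_mul_log.2 (Set.mem_Ici.2 hρ1.le) (Set.mem_Ici.2 hρ2.le) ha hb hab
      simpa using this
    have h3' : (γ - 1) * (ρ * Real.log ρ) ≤
        (γ - 1) * (a * (ρ1 * Real.log ρ1) + b * (ρ2 * Real.log ρ2)) :=
      mul_le_mul_of_nonneg_left h3 hc.le
    have hlin : -(ρ * Real.log (γ - 1)) =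
        a * (-(ρ1 * Real.log (γ - 1))) + b * (-(ρ2 * Real.log (γ - 1))) := by
      rw [hρdef]; ring
    simp only [hρdef] at h1 h2 h3' hlin ⊢
    nlinarith [h1, h2, h3', hlin]
end
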